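/- arXiv:1410.5137 — 7 statements merged into one kernel-verified Lean document; each statement's English description precedes it below -/
import Mathlib

section
/- Let $z \in \mathbb{R}^d$ and let $\theta = P_s(z)$ be the vector obtained by keeping the $s$ largest-magnitude coordinates of $z$ and setting the rest to zero. Then for any $s^*$-sparse vector $\theta^* \in \mathbb{R}^d$ with $s^* \le s \le d$, we have $\|\theta - z\|_2^2 \le \frac{d - s}{d - s^*} \|\theta^* - z\|_2^2$ (interpreting the ratio as $0$ when $d = s$, noting $d \ge s \ge s^*$). -/
/-- Hard thresholding lemma: if `θ = P_s z` keeps the `s` largest-magnitude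
coordinates of `z` (given by the set `S`) and zeroes the rest, then for any
`s*`-sparse `θ*` we have `‖θ - z‖² ≤ (d - s)/(d - s*) ‖θ* - z‖²`. -/
theorem hard_thresholding_lemma (d s sstar : ℕ) (hss : sstar ≤ s) (hsd : s ≤ d)
    (hsd' : sstar < d) (z θ θstar : Fin d → ℝ) (S : Finset (Fin d))
    (hcard : S.card = s)
    (hin : ∀ i ∈ S, θ i = z i) (hout : ∀ i ∉ S, θ i = 0)
    (htop : ∀ i ∈ S, ∀ j ∉ S, |z j| ≤ |z i|)
    (hsparse : (Finset.univ.filter fun i => θstar i ≠ 0).card ≤ sstar) :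
    ∑ i, (θ i - z i) ^ 2 ≤
      ((d - s : ℕ) : ℝ) / ((d - sstar : ℕ) : ℝ) * ∑ i, (θstar i - z i) ^ 2 := by
  classical
  -- enlarge the support of θstar to a set T of cardinality exactly sstar
  obtain ⟨T, hT0, hTu, hTcard⟩ :=
    Finset.exists_subsuperset_card_eq (Finset.subset_univ _) hsparse
      (by simpa using hsd'.le : sstar ≤ (Finset.univ : Finset (Fin d)).card)
  have hTz : ∀ i ∉ T, θstar i = 0 := by
    intro i hi
    by_contra h
    exact hi (hT0 (Finset.mem_filter.mpr ⟨Finset.mem_univ i, h⟩))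
  -- LHS rewrite
  have hLHS : ∑ i, (θ i - z i) ^ 2 = ∑ i ∈ Sᶜ, (z i) ^ 2 := by
    rw [← Finset.sum_add_sum_compl S]
    have h1 : ∑ i ∈ S, (θ i - z i) ^ 2 = 0 :=
      Finset.sum_eq_zero fun i hi => by rw [hin i hi]; ring
    have h2 : ∑ i ∈ Sᶜ, (θ i - z i) ^ 2 = ∑ i ∈ Sᶜ, (z i) ^ 2 :=
      Finset.sum_congr rfl fun i hi => by
        rw [hout i (Finset.mem_compl.mp hi)]; ring
    rw [h1, h2, zero_add]
  -- RHS lower bound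
  have hRHS : ∑ i ∈ Tᶜ, (z i) ^ 2 ≤ ∑ i, (θstar i - z i) ^ 2 := by
    calc ∑ i ∈ Tᶜ, (z i) ^ 2 = ∑ i ∈ Tᶜ, (θstar i - z i) ^ 2 :=
          Finset.sum_congr rfl fun i hi => by
            rw [hTz i (Finset.mem_compl.mp hi)]; ring
      _ ≤ ∑ i, (θstar i - z i) ^ 2 :=
          Finset.sum_le_sum_of_subset_of_nonneg (Finset.subset_univ _)
            (fun i _ _ => sq_nonneg _)
  -- splitting the sums
  set A : Finset (Fin d) := Sᶜ ∩ Tᶜ with hA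
  set B : Finset (Fin d) := Sᶜ ∩ T with hB
  set C : Finset (Fin d) := Tᶜ ∩ S with hC
  have hsplitS : ∑ i ∈ Sᶜ, (z i) ^ 2 = ∑ i ∈ B, (z i) ^ 2 + ∑ i ∈ A, (z i) ^ 2 := by
    rw [hB, hA, ← Finset.sdiff_eq_inter_compl, Finset.sum_inter_add_sum_sdiff]
  have hsplitT : ∑ i ∈ Tᶜ, (z i) ^ 2 = ∑ i ∈ C, (z i) ^ 2 + ∑ i ∈ A, (z i) ^ 2 := by
    rw [hC, hA, Finset.inter_comm Sᶜ Tᶜ, ← Finset.sdiff_eq_inter_compl,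
      Finset.sum_inter_add_sum_sdiff]
  -- cardinalities
  have hcardS : (B.card : ℝ) + (A.card : ℝ) = ((d - s : ℕ) : ℝ) := by
    rw [← Nat.cast_add, hB, hA, ← Finset.sdiff_eq_inter_compl,
      Finset.card_inter_add_card_sdiff, Finset.card_compl, Fintype.card_fin, hcard]
  have hcardT : (C.card : ℝ) + (A.card : ℝ) = ((d - sstar : ℕ) : ℝ) := by
    rw [← Nat.cast_add, hC, hA, Finset.inter_comm Sᶜ Tᶜ, ← Finset.sdiff_eq_inter_compl,
      Finset.card_inter_add_card_sdiff, Finset.card_compl, Fintype.card_fin, hTcard]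
  -- key inequality
  have hkey : ((d - sstar : ℕ) : ℝ) * ∑ i ∈ Sᶜ, (z i) ^ 2
      ≤ ((d - s : ℕ) : ℝ) * ∑ i ∈ Tᶜ, (z i) ^ 2 := by
    rcases S.eq_empty_or_nonempty with hSe | hSne
    · -- then s = 0, sstar = 0, T = ∅
      have hs0 : s = 0 := by rw [← hcard, hSe, Finset.card_empty]
      have hsstar0 : sstar = 0 := le_antisymm (hs0 ▸ hss) (Nat.zero_le _)
      have hT : T = ∅ := Finset.card_eq_zero.mp (by rw [hTcard, hsstar0])
      rw [hSe, hT, hs0, hsstar0]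
    · obtain ⟨i0, hi0, hmin⟩ := S.exists_min_image (fun i => (z i) ^ 2) hSne
      set m : ℝ := (z i0) ^ 2 with hm
      have hm0 : 0 ≤ m := sq_nonneg _
      have hout_le : ∀ j ∉ S, (z j) ^ 2 ≤ m := by
        intro j hj
        have h := htop i0 hi0 j hj
        calc (z j) ^ 2 = |z j| ^ 2 := (sq_abs _).symm
          _ ≤ |z i0| ^ 2 := by
              exact pow_le_pow_left₀ (abs_nonneg _) h 2
          _ = m := sq_abs _
      have hSA : ∑ i ∈ A, (z i) ^ 2 ≤ (A.card : ℝ) * m := by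
        have := Finset.sum_le_card_nsmul A (fun i => (z i) ^ 2) m
          (fun i hi => hout_le i (Finset.mem_compl.mp (Finset.mem_of_mem_inter_left hi)))
        simpa [nsmul_eq_mul] using this
      have hSB : ∑ i ∈ B, (z i) ^ 2 ≤ (B.card : ℝ) * m := by
        have := Finset.sum_le_card_nsmul B (fun i => (z i) ^ 2) m
          (fun i hi => hout_le i (Finset.mem_compl.mp (Finset.mem_of_mem_inter_left hi)))
        simpa [nsmul_eq_mul] using this
      have hSC : (C.card : ℝ) * m ≤ ∑ i ∈ C, (z i) ^ 2 := by
        have := Finset.card_nsmul_le_sum C (fun i => (z i) ^ 2) m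
          (fun i hi => hmin i (Finset.mem_of_mem_inter_right hi))
        simpa [nsmul_eq_mul] using this
      have hbc : (B.card : ℝ) ≤ (C.card : ℝ) := by
        have h1 : ((d - s : ℕ) : ℝ) ≤ ((d - sstar : ℕ) : ℝ) := by
          exact_mod_cast Nat.sub_le_sub_left hss d
        linarith [hcardS, hcardT]
      have hSAnn : (0:ℝ) ≤ ∑ i ∈ A, (z i) ^ 2 :=
        Finset.sum_nonneg fun i _ => sq_nonneg _
      rw [hsplitS, hsplitT, ← hcardS, ← hcardT]
      nlinarith [mul_nonneg (sub_nonneg.mpr hbc) (sub_nonneg.mpr hSA),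
        mul_le_mul_of_nonneg_left hSB (by positivity : (0:ℝ) ≤ (A.card : ℝ) + (C.card : ℝ)),
        mul_le_mul_of_nonneg_left hSC (by positivity : (0:ℝ) ≤ (A.card : ℝ) + (B.card : ℝ))]
  -- assemble
  have hdpos : (0:ℝ) < ((d - sstar : ℕ) : ℝ) := by
    exact_mod_cast Nat.sub_pos_of_lt hsd'
  rw [hLHS, div_mul_eq_mul_div, le_div_iff₀ hdpos, mul_comm]
  calc ((d - sstar : ℕ) : ℝ) * ∑ i ∈ Sᶜ, (z i) ^ 2
      ≤ ((d - s : ℕ) : ℝ) * ∑ i ∈ Tᶜ, (z i) ^ 2 := hkey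
    _ ≤ ((d - s : ℕ) : ℝ) * ∑ i, (θstar i - z i) ^ 2 :=
        mul_le_mul_of_nonneg_left hRHS (by positivity)
end

section
/- Let $W \in \mathbb{R}^{p_1 \times p_2}$ have rank $m$, and let $PM_s(W)$ denote the best rank-$s$ approximation of $W$ obtained by truncating its singular value decomposition to the top $s$ singular values, with $s^* \le s \le m$ and $s^* < m$. Then for any rank-$s^*$ matrix $W^* \in \mathbb{R}^{p_1 \times p_2}$, $\|PM_s(W) - W\|_F^2 \le \frac{m - s}{m - s^*} \|W^* - W\|_F^2$. -/
/-!
Write `W = ∑ σₖ uₖ vₖᵀ`, so that `W vⱼ = σⱼ uⱼ`, and let `K` be the column space of `W*`, of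
dimension at most `s*`. As `W* vⱼ ∈ K`, the distance from `σⱼ uⱼ` to `K` gives
`‖(W* - W) vⱼ‖² ≥ σⱼ² (1 - tⱼ)` with `tⱼ = ‖P_K uⱼ‖² ∈ [0, 1]`, and `∑ tⱼ ≤ dim K ≤ s*` by Bessel's
inequality against an orthonormal basis of `K`. Summing over `j` (Bessel again, row by row) and
using that `σⱼ²` decreases yields Eckart–Young: `‖W* - W‖_F² ≥ ∑_{j ≥ s*} σⱼ²`. On the other hand
`‖PM_s W - W‖_F² = ∑_{j ≥ s} σⱼ²`, and the mean of the decreasing sequence `σⱼ²` over `[s, m)` is at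
most its mean over `[s*, m)`.
-/

open Finset Module Matrix WithLp

section Antitone

variable {m : ℕ} {a : ℕ → ℝ}

theorem sum_Ico_le_sum_range_mul_one_sub {r : ℕ} {t : ℕ → ℝ} (ha₀ : ∀ j < m, 0 ≤ a j)
    (ha : ∀ i j, i ≤ j → j < m → a j ≤ a i) (ht₀ : ∀ j < m, 0 ≤ t j) (ht₁ : ∀ j < m, t j ≤ 1)
    (ht : ∑ j ∈ range m, t j ≤ r) :
    ∑ j ∈ Ico r m, a j ≤ ∑ j ∈ range m, a j * (1 - t j) := by
  rcases le_or_gt m r with hmr | hrm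
  · rw [Ico_eq_empty_of_le hmr, sum_empty]
    exact sum_nonneg fun j hj =>
      mul_nonneg (ha₀ j (mem_range.1 hj)) (sub_nonneg.2 (ht₁ j (mem_range.1 hj)))
  have head : a r * (r - ∑ j ∈ range r, t j) ≤ ∑ j ∈ range r, a j * (1 - t j) :=
    calc a r * (r - ∑ j ∈ range r, t j) = ∑ j ∈ range r, a r * (1 - t j) := by
          simp [mul_sum, sum_sub_distrib, mul_sub, mul_comm]
      _ ≤ ∑ j ∈ range r, a j * (1 - t j) := sum_le_sum fun j hj => by
          have hj := mem_range.1 hj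
          exact mul_le_mul_of_nonneg_right (ha j r hj.le hrm)
            (sub_nonneg.2 (ht₁ j (hj.trans hrm)))
  have tail :
      ∑ j ∈ Ico r m, a j - a r * ∑ j ∈ Ico r m, t j ≤ ∑ j ∈ Ico r m, a j * (1 - t j) := by
    rw [mul_sum, ← sum_sub_distrib]
    refine sum_le_sum fun j hj => ?_
    obtain ⟨hrj, hjm⟩ := mem_Ico.1 hj
    nlinarith [ha r j hrj hjm, ht₀ j hjm]
  rw [← sum_range_add_sum_Ico _ hrm.le] at ht ⊢
  nlinarith [mul_nonneg (ha₀ r hrm) (sub_nonneg.2 ht)]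

theorem natCast_sub_mul_sum_Ico_le {r s : ℕ} (hrs : r ≤ s) (hsm : s ≤ m)
    (ha : ∀ i j, i ≤ j → j < m → a j ≤ a i) :
    ((m - r : ℕ) : ℝ) * ∑ j ∈ Ico s m, a j ≤ ((m - s : ℕ) : ℝ) * ∑ j ∈ Ico r m, a j := by
  have cross :
      ((s - r : ℕ) : ℝ) * ∑ j ∈ Ico s m, a j ≤ ((m - s : ℕ) : ℝ) * ∑ i ∈ Ico r s, a i :=
    calc ((s - r : ℕ) : ℝ) * ∑ j ∈ Ico s m, a j = ∑ _i ∈ Ico r s, ∑ j ∈ Ico s m, a j := by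
          simp
      _ ≤ ∑ i ∈ Ico r s, ∑ _j ∈ Ico s m, a i := sum_le_sum fun i hi => sum_le_sum fun j hj =>
          ha i j ((mem_Ico.1 hi).2.le.trans (mem_Ico.1 hj).1) (mem_Ico.1 hj).2
      _ = ((m - s : ℕ) : ℝ) * ∑ i ∈ Ico r s, a i := by simp [mul_sum]
  have hcard : ((m - r : ℕ) : ℝ) = (s - r : ℕ) + (m - s : ℕ) := by norm_cast; omega
  rw [hcard, ← sum_Ico_consecutive a hrs hsm]
  linarith

end Antitone

section InnerProduct

variable {𝕜 E : Type*} [RCLike 𝕜] [NormedAddCommGroup E] [InnerProductSpace 𝕜 E]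

theorem Submodule.norm_sq_sub_norm_sq_starProjection_le (K : Submodule 𝕜 E)
    [K.HasOrthogonalProjection] {y : E} (hy : y ∈ K) (x : E) :
    ‖x‖ ^ 2 - ‖K.starProjection x‖ ^ 2 ≤ ‖y - x‖ ^ 2 := by
  have hmin : ‖x - K.starProjection x‖ ≤ ‖x - y‖ :=
    (starProjection_minimal x).trans_le
      (ciInf_le ⟨0, Set.forall_mem_range.2 fun z : K => norm_nonneg (x - z)⟩ ⟨y, hy⟩)
  rw [K.norm_sq_eq_add_norm_sq_starProjection x, starProjection_orthogonal_val, norm_sub_rev y]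
  nlinarith [norm_nonneg (x - K.starProjection x)]

theorem Submodule.sum_norm_sq_starProjection_le_finrank (K : Submodule 𝕜 E)
    [FiniteDimensional 𝕜 K] {ι : Type*} {v : ι → E} (hv : Orthonormal 𝕜 v) (s : Finset ι) :
    ∑ i ∈ s, ‖K.starProjection (v i)‖ ^ 2 ≤ finrank 𝕜 K := by
  let b := stdOrthonormalBasis 𝕜 K
  have hproj : ∀ i, ‖K.starProjection (v i)‖ ^ 2 = ∑ k, ‖inner 𝕜 (v i) (b k : E)‖ ^ 2 := by
    intro i
    rw [starProjection_apply, ← Submodule.coe_norm, ← b.sum_sq_norm_inner_right]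
    simp only [inner_orthogonalProjectionOnto_eq_of_mem_left, norm_inner_symm]
  calc ∑ i ∈ s, ‖K.starProjection (v i)‖ ^ 2
      = ∑ k, ∑ i ∈ s, ‖inner 𝕜 (v i) (b k : E)‖ ^ 2 := by simp only [hproj]; exact sum_comm
    _ ≤ ∑ k, ‖(b k : E)‖ ^ 2 := sum_le_sum fun k _ => by
        simpa only [norm_inner_symm] using hv.sum_inner_products_le (s := s) (b k : E)
    _ = finrank 𝕜 K := by simp [show ∀ k, ‖(b k : E)‖ = 1 from fun k => b.orthonormal.1 k]

end InnerProduct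

theorem orthonormal_toLp_of_sum_mul {n : Type*} [Fintype n] {m : ℕ} {u : ℕ → n → ℝ}
    (hu : ∀ i < m, ∀ j < m, (∑ k, u i k * u j k) = if i = j then (1 : ℝ) else 0) :
    Orthonormal ℝ (fun j : Fin m => toLp 2 (u j)) := by
  classical
  rw [orthonormal_iff_ite]
  intro i j
  simp [EuclideanSpace.inner_toLp_toLp, dotProduct, mul_comm, hu i i.2 j j.2, Fin.val_inj]

theorem Matrix.sum_norm_sq_toLpLin_le {ι m n : Type*} [Fintype m] [Fintype n] [DecidableEq n]
    (D : Matrix m n ℝ) {v : ι → EuclideanSpace ℝ n} (hv : Orthonormal ℝ v) (s : Finset ι) :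
    ∑ j ∈ s, ‖toLpLin 2 2 D (v j)‖ ^ 2 ≤ ∑ i, ∑ l, D i l ^ 2 := by
  have hrow : ∀ j, ‖toLpLin 2 2 D (v j)‖ ^ 2 = ∑ i, inner ℝ (v j) (toLp 2 (D i)) ^ 2 := by
    intro j
    rw [EuclideanSpace.real_norm_sq_eq]
    rfl
  calc ∑ j ∈ s, ‖toLpLin 2 2 D (v j)‖ ^ 2
      = ∑ i, ∑ j ∈ s, inner ℝ (v j) (toLp 2 (D i)) ^ 2 := by simp only [hrow]; exact sum_comm
    _ ≤ ∑ i, ‖toLp 2 (D i)‖ ^ 2 := sum_le_sum fun i _ => by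
        simpa using hv.sum_inner_products_le (s := s) (toLp 2 (D i))
    _ = ∑ i, ∑ l, D i l ^ 2 := by simp [EuclideanSpace.real_norm_sq_eq]

section Coordinates

variable {ι m n : Type*} [Fintype n] [DecidableEq ι] {F : Finset ι} {v : ι → n → ℝ}

theorem sum_sq_sum_mul_of_orthonormal
    (hv : ∀ k ∈ F, ∀ k' ∈ F, (∑ j, v k j * v k' j) = if k = k' then (1 : ℝ) else 0)
    (c : ι → ℝ) : ∑ j, (∑ k ∈ F, c k * v k j) ^ 2 = ∑ k ∈ F, c k ^ 2 :=
  calc ∑ j, (∑ k ∈ F, c k * v k j) ^ 2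
      = ∑ k ∈ F, ∑ k' ∈ F, c k * c k' * ∑ j, v k j * v k' j := by
        simp_rw [sq, sum_mul_sum, mul_sum]
        rw [sum_comm]
        refine sum_congr rfl fun k _ => ?_
        rw [sum_comm]
        exact sum_congr rfl fun k' _ => sum_congr rfl fun j _ => by ring
    _ = ∑ k ∈ F, c k ^ 2 := sum_congr rfl fun k hk => by
        rw [sum_congr rfl fun k' hk' => by rw [hv k hk k' hk']]
        simp [hk, sq]

theorem sum_smul_vecMulVec_mulVec_of_orthonormal (c : ι → ℝ) (u : ι → m → ℝ)
    (hv : ∀ k ∈ F, ∀ k' ∈ F, (∑ j, v k j * v k' j) = if k = k' then (1 : ℝ) else 0)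
    {k : ι} (hk : k ∈ F) :
    (∑ k ∈ F, c k • vecMulVec (u k) (v k)) *ᵥ v k = c k • u k := by
  rw [sum_mulVec]
  simp only [smul_mulVec, vecMulVec_mulVec, dotProduct, op_smul_eq_smul]
  rw [sum_congr rfl fun k' hk' => by rw [hv k' hk' k hk]]
  simp [hk]

theorem sum_sq_sum_smul_vecMulVec [Fintype m] (c : ι → ℝ) {u : ι → m → ℝ}
    (hu : ∀ k ∈ F, ∑ i, u k i * u k i = 1)
    (hv : ∀ k ∈ F, ∀ k' ∈ F, (∑ j, v k j * v k' j) = if k = k' then (1 : ℝ) else 0) :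
    ∑ i, ∑ j, (∑ k ∈ F, c k • vecMulVec (u k) (v k)) i j ^ 2 = ∑ k ∈ F, c k ^ 2 :=
  calc ∑ i, ∑ j, (∑ k ∈ F, c k • vecMulVec (u k) (v k)) i j ^ 2
      = ∑ i, ∑ k ∈ F, (c k * u k i) ^ 2 := sum_congr rfl fun i _ => by
        rw [← sum_sq_sum_mul_of_orthonormal hv]
        simp [Matrix.sum_apply, vecMulVec_apply, mul_assoc]
    _ = ∑ k ∈ F, c k ^ 2 := by
        rw [sum_comm]
        exact sum_congr rfl fun k hk => by
          simp_rw [mul_pow, sq (u k _), ← mul_sum, hu k hk, mul_one]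

end Coordinates

theorem sum_Ico_sq_le_sum_sq_sub_of_rank_le {ι κ : Type*} [Fintype ι] [Fintype κ]
    [DecidableEq κ] {m r : ℕ} {σ : ℕ → ℝ} (hσ₀ : ∀ i < m, 0 ≤ σ i)
    (hσ : ∀ i j, i ≤ j → j < m → σ j ≤ σ i) {u : ℕ → ι → ℝ} {v : ℕ → κ → ℝ}
    (hu : ∀ i < m, ∀ j < m, (∑ k, u i k * u j k) = if i = j then (1 : ℝ) else 0)
    (hv : ∀ i < m, ∀ j < m, (∑ k, v i k * v j k) = if i = j then (1 : ℝ) else 0)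
    {W Wstar : Matrix ι κ ℝ} (hW : W = ∑ i ∈ range m, σ i • vecMulVec (u i) (v i))
    (hrank : Wstar.rank ≤ r) :
    ∑ k ∈ Ico r m, σ k ^ 2 ≤ ∑ i, ∑ j, (Wstar i j - W i j) ^ 2 := by
  let K := LinearMap.range (toLpLin 2 2 Wstar)
  have hK : finrank ℝ K ≤ r :=
    rank_eq_finrank_range_toLin Wstar (PiLp.basisFun 2 ℝ ι) (PiLp.basisFun 2 ℝ κ) ▸ hrank
  have hU := orthonormal_toLp_of_sum_mul hu
  let t : ℕ → ℝ := fun j => ‖K.starProjection (toLp 2 (u j))‖ ^ 2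
  have ht₁ : ∀ j < m, t j ≤ 1 := fun j hj => by
    have := pow_le_pow_left₀ (norm_nonneg _) (K.norm_starProjection_apply_le (toLp 2 (u j))) 2
    rwa [hU.1 ⟨j, hj⟩, one_pow] at this
  have ht : ∑ j ∈ range m, t j ≤ r := by
    rw [← Fin.sum_univ_eq_sum_range]
    exact (K.sum_norm_sq_starProjection_le_finrank hU univ).trans (by exact_mod_cast hK)
  have hdir : ∀ j < m, σ j ^ 2 * (1 - t j) ≤ ‖toLpLin 2 2 (Wstar - W) (toLp 2 (v j))‖ ^ 2 := by
    intro j hj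
    have hWv : W *ᵥ v j = σ j • u j := by
      rw [hW]
      exact sum_smul_vecMulVec_mulVec_of_orthonormal σ u
        (fun k hk k' hk' => hv k (mem_range.1 hk) k' (mem_range.1 hk')) (mem_range.2 hj)
    have hx : toLpLin 2 2 (Wstar - W) (toLp 2 (v j))
        = toLpLin 2 2 Wstar (toLp 2 (v j)) - σ j • toLp 2 (u j) := by
      rw [map_sub, LinearMap.sub_apply, toLpLin_apply 2 2 W, ofLp_toLp, hWv, toLp_smul]
    have hdist := K.norm_sq_sub_norm_sq_starProjection_le
      (LinearMap.mem_range_self _ (toLp 2 (v j))) (σ j • toLp 2 (u j))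
    rw [map_smul, norm_smul, norm_smul, hU.1 ⟨j, hj⟩, ← hx] at hdist
    simp only [Real.norm_eq_abs, mul_pow, sq_abs, mul_one] at hdist
    simp only [t]
    linarith
  calc ∑ k ∈ Ico r m, σ k ^ 2 ≤ ∑ j ∈ range m, σ j ^ 2 * (1 - t j) :=
        sum_Ico_le_sum_range_mul_one_sub (fun j _ => sq_nonneg _)
          (fun i j hij hj => pow_le_pow_left₀ (hσ₀ j hj) (hσ i j hij hj) 2)
          (fun j _ => sq_nonneg _) ht₁ ht
    _ ≤ ∑ j ∈ range m, ‖toLpLin 2 2 (Wstar - W) (toLp 2 (v j))‖ ^ 2 :=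
        sum_le_sum fun j hj => hdir j (mem_range.1 hj)
    _ ≤ ∑ i, ∑ j, (Wstar i j - W i j) ^ 2 := by
        rw [← Fin.sum_univ_eq_sum_range (fun j => ‖toLpLin 2 2 (Wstar - W) (toLp 2 (v j))‖ ^ 2)]
        exact (Wstar - W).sum_norm_sq_toLpLin_le (orthonormal_toLp_of_sum_mul hv) univ

theorem matrix_hard_thresholding_general (p1 p2 m s sstar : ℕ) (hss : sstar ≤ s)
    (hsm : s ≤ m) (hsm' : sstar < m)
    (σ : ℕ → ℝ) (hpos : ∀ i < m, 0 < σ i)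
    (hsort : ∀ i j, i ≤ j → j < m → σ j ≤ σ i)
    (u : ℕ → Fin p1 → ℝ) (v : ℕ → Fin p2 → ℝ)
    (hu : ∀ i < m, ∀ j < m, (∑ k, u i k * u j k) = if i = j then (1 : ℝ) else 0)
    (hv : ∀ i < m, ∀ j < m, (∑ k, v i k * v j k) = if i = j then (1 : ℝ) else 0)
    (W P Wstar : Matrix (Fin p1) (Fin p2) ℝ)
    (hW : W = ∑ i ∈ Finset.range m, σ i • Matrix.vecMulVec (u i) (v i))
    (hP : P = ∑ i ∈ Finset.range s, σ i • Matrix.vecMulVec (u i) (v i))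
    (hrank : Wstar.rank ≤ sstar) :
    ∑ i, ∑ j, (P i j - W i j) ^ 2 ≤
      ((m - s : ℕ) : ℝ) / ((m - sstar : ℕ) : ℝ) *
        ∑ i, ∑ j, (Wstar i j - W i j) ^ 2 := by
  have hσ₀ : ∀ i < m, 0 ≤ σ i := fun i hi => (hpos i hi).le
  have hresidual : ∑ i, ∑ j, (P i j - W i j) ^ 2 = ∑ k ∈ Ico s m, σ k ^ 2 := by
    have hsplit : W = P + ∑ k ∈ Ico s m, σ k • vecMulVec (u k) (v k) := by
      rw [hW, hP, sum_range_add_sum_Ico _ hsm]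
    have hIco : ∀ k ∈ Ico s m, k < m := fun k hk => (mem_Ico.1 hk).2
    simpa [hsplit] using sum_sq_sum_smul_vecMulVec σ
      (fun k hk => by simpa using hu k (hIco k hk) k (hIco k hk))
      (fun k hk k' hk' => hv k (hIco k hk) k' (hIco k' hk'))
  have htail := natCast_sub_mul_sum_Ico_le hss hsm
    (fun i j hij hj => pow_le_pow_left₀ (hσ₀ j hj) (hsort i j hij hj) 2)
  have heckartYoung := sum_Ico_sq_le_sum_sq_sub_of_rank_le hσ₀ hsort hu hv hW hrank
  rw [hresidual, div_mul_eq_mul_div, le_div_iff₀ (by exact_mod_cast Nat.sub_pos_of_lt hsm'),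
    mul_comm]
  exact htail.trans (mul_le_mul_of_nonneg_left heckartYoung (Nat.cast_nonneg _))

/-- Matrix hard thresholding lemma: if `W` has rank `m` with SVD
`W = ∑_{i<m} σ i • u i (v i)ᵀ` (orthonormal `u`, `v`, decreasing positive `σ`)
and `PM_s W = ∑_{i<s} σ i • u i (v i)ᵀ` is its best rank-`s` SVD truncation,
then for any rank-`s*` matrix `W*` with `s* ≤ s ≤ m`, `s* < m`,
`‖PM_s W - W‖_F² ≤ (m-s)/(m-s*) ‖W* - W‖_F²`. -/
theorem matrix_hard_thresholding (p1 p2 m s sstar : ℕ) (hss : sstar ≤ s)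
    (hsm : s ≤ m) (hsm' : sstar < m) (hm1 : m ≤ p1) (hm2 : m ≤ p2)
    (σ : ℕ → ℝ) (hpos : ∀ i < m, 0 < σ i)
    (hsort : ∀ i j, i ≤ j → j < m → σ j ≤ σ i)
    (u : ℕ → Fin p1 → ℝ) (v : ℕ → Fin p2 → ℝ)
    (hu : ∀ i < m, ∀ j < m, (∑ k, u i k * u j k) = if i = j then (1 : ℝ) else 0)
    (hv : ∀ i < m, ∀ j < m, (∑ k, v i k * v j k) = if i = j then (1 : ℝ) else 0)
    (W P Wstar : Matrix (Fin p1) (Fin p2) ℝ)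
    (hW : W = ∑ i ∈ Finset.range m, σ i • Matrix.vecMulVec (u i) (v i))
    (hP : P = ∑ i ∈ Finset.range s, σ i • Matrix.vecMulVec (u i) (v i))
    (hrank : Wstar.rank ≤ sstar) :
    ∑ i, ∑ j, (P i j - W i j) ^ 2 ≤
      ((m - s : ℕ) : ℝ) / ((m - sstar : ℕ) : ℝ) *
        ∑ i, ∑ j, (Wstar i j - W i j) ^ 2 :=
  matrix_hard_thresholding_general p1 p2 m s sstar hss hsm hsm' σ hpos hsort u v hu hv W P Wstar hW
    hP hrank
end

section
/- Let $f : \mathbb{R}^p \to \mathbb{R}$ be differentiable and satisfy restricted strong convexity at sparsity level $s + s^*$ with parameter $\alpha > 0$. Let $\theta^t$ be $s$-sparse with support $S_t$, let $\theta^*$ be $s^*$-sparse with support $S^*$, and write $g^t = \nabla f(\theta^t)$. Then $f(\theta^t) - f(\theta^*) \le \frac{1}{2\alpha} \|g^t_{S_t \cup S^*}\|_2^2$, where $g^t_{S}$ denotes the restriction of $g^t$ to the coordinates in $S$ (zero elsewhere). -/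
/-- RSC gradient bound: if `f` satisfies restricted strong convexity at level
`s + s*` with parameter `α`, `θt` is `s`-sparse with support `S_t`, `θ*` is
`s*`-sparse with support `S*`, then
`f(θt) - f(θ*) ≤ (1/2α) ‖∇f(θt)_{S_t ∪ S*}‖²`. -/
theorem rsc_gradient_bound (p s sstar : ℕ) (α : ℝ) (hα : 0 < α)
    (f : (Fin p → ℝ) → ℝ) (grad : (Fin p → ℝ) → Fin p → ℝ)
    (hdiff : Differentiable ℝ f)
    (hgrad : ∀ x v, fderiv ℝ f x v = ∑ i, grad x i * v i)
    (hRSC : ∀ θ1 θ2 : Fin p → ℝ,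
      (Finset.univ.filter fun i => θ1 i ≠ 0).card +
          (Finset.univ.filter fun i => θ2 i ≠ 0).card ≤ s + sstar →
      f θ1 - f θ2 ≥ (∑ i, (θ1 i - θ2 i) * grad θ2 i) +
        α / 2 * ∑ i, (θ1 i - θ2 i) ^ 2)
    (θt θstar : Fin p → ℝ)
    (hθt : (Finset.univ.filter fun i => θt i ≠ 0).card ≤ s)
    (hθstar : (Finset.univ.filter fun i => θstar i ≠ 0).card ≤ sstar) :
    f θt - f θstar ≤ 1 / (2 * α) *
      ∑ i ∈ (Finset.univ.filter fun i => θt i ≠ 0) ∪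
          (Finset.univ.filter fun i => θstar i ≠ 0), (grad θt i) ^ 2 := by
  have key := hRSC θstar θt (by omega)
  set S := (Finset.univ.filter fun i => θt i ≠ 0) ∪
      (Finset.univ.filter fun i => θstar i ≠ 0) with hS
  have hsum : ∑ i ∈ S, (grad θt i) ^ 2 =
      ∑ i : Fin p, (if i ∈ S then (grad θt i) ^ 2 else 0) := by
    rw [Finset.sum_ite_mem, Finset.univ_inter]
  have hpt : ∀ i : Fin p,
      -((θstar i - θt i) * grad θt i) - α / 2 * (θstar i - θt i) ^ 2 ≤
      1 / (2 * α) * (if i ∈ S then (grad θt i) ^ 2 else 0) := by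
    intro i
    by_cases hi : i ∈ S
    · simp only [hi, if_true]
      have h1 : (0:ℝ) ≤ (α * (θstar i - θt i) + grad θt i) ^ 2 := sq_nonneg _
      rw [show (1:ℝ)/(2*α) * grad θt i ^ 2 = grad θt i ^ 2 / (2*α) by ring,
        le_div_iff₀ (by positivity)]
      nlinarith
    · have h0 : θt i = 0 ∧ θstar i = 0 := by
        simp only [hS, Finset.mem_union, Finset.mem_filter, Finset.mem_univ,
          true_and, not_or, not_not] at hi
        exact ⟨hi.1, hi.2⟩
      simp [h0.1, h0.2]
      positivity
  have hbig : -(∑ i, (θstar i - θt i) * grad θt i) -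
      α / 2 * ∑ i, (θstar i - θt i) ^ 2 ≤
      1 / (2 * α) * ∑ i ∈ S, (grad θt i) ^ 2 := by
    rw [hsum, Finset.mul_sum, Finset.mul_sum, ← Finset.sum_neg_distrib,
      ← Finset.sum_sub_distrib]
    exact Finset.sum_le_sum fun i _ => hpt i
  linarith
end

section
/- Let $\mathcal{L} : \mathbb{R}^p \to \mathbb{R}$ be differentiable and satisfy restricted strong convexity at sparsity level $s + s^*$ with parameter $\alpha > 0$. Let $\bar{\theta}$ be $s^*$-sparse, let $\theta^\tau$ be $s$-sparse, and suppose $\mathcal{L}(\theta^\tau) \le \mathcal{L}(\bar{\theta}) + \epsilon$ for some $\epsilon \ge 0$. Then $\|\bar{\theta} - \theta^\tau\|_2 \le \frac{2\sqrt{s+s^*}\,\|\nabla \mathcal{L}(\bar{\theta})\|_\infty}{\alpha} + \sqrt{\frac{2\epsilon}{\alpha}}$. -/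
/-- Statistical estimation bound (Theorem 3 of the paper): if `𝓛` satisfies
RSC at level `s + s*` with parameter `α`, `θ̄` is `s*`-sparse, `θτ` is
`s`-sparse and `𝓛(θτ) ≤ 𝓛(θ̄) + ε`, then
`‖θ̄ - θτ‖₂ ≤ 2√(s+s*)‖∇𝓛(θ̄)‖_∞/α + √(2ε/α)`.
Here `‖grad θbar‖` is the sup norm on `Fin p → ℝ`. -/
theorem statistical_estimation_bound (p s sstar : ℕ) (α ε : ℝ)
    (hα : 0 < α) (hε : 0 ≤ ε)
    (𝓛 : (Fin p → ℝ) → ℝ) (grad : (Fin p → ℝ) → Fin p → ℝ)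
    (hdiff : Differentiable ℝ 𝓛)
    (hgrad : ∀ x v, fderiv ℝ 𝓛 x v = ∑ i, grad x i * v i)
    (hRSC : ∀ θ1 θ2 : Fin p → ℝ,
      (Finset.univ.filter fun i => θ1 i ≠ 0).card +
          (Finset.univ.filter fun i => θ2 i ≠ 0).card ≤ s + sstar →
      𝓛 θ1 - 𝓛 θ2 ≥ (∑ i, (θ1 i - θ2 i) * grad θ2 i) +
        α / 2 * ∑ i, (θ1 i - θ2 i) ^ 2)
    (θbar θτ : Fin p → ℝ)
    (hθbar : (Finset.univ.filter fun i => θbar i ≠ 0).card ≤ sstar)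
    (hθτ : (Finset.univ.filter fun i => θτ i ≠ 0).card ≤ s)
    (hopt : 𝓛 θτ ≤ 𝓛 θbar + ε) :
    Real.sqrt (∑ i, (θbar i - θτ i) ^ 2) ≤
      2 * Real.sqrt ((s + sstar : ℕ) : ℝ) * ‖grad θbar‖ / α +
        Real.sqrt (2 * ε / α) := by
  classical
  set d : Fin p → ℝ := fun i => θbar i - θτ i with hd
  set G : ℝ := ‖grad θbar‖ with hG
  have hG0 : 0 ≤ G := norm_nonneg _
  set k : ℝ := ((s + sstar : ℕ) : ℝ) with hk
  have hk0 : (0:ℝ) ≤ k := Nat.cast_nonneg _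
  set Δ : ℝ := Real.sqrt (∑ i, d i ^ 2) with hΔ
  have hΔ0 : 0 ≤ Δ := Real.sqrt_nonneg _
  have hΔsq : Δ ^ 2 = ∑ i, d i ^ 2 := by
    rw [hΔ, Real.sq_sqrt]; positivity
  -- RSC applied
  have hcard : (Finset.univ.filter fun i => θτ i ≠ 0).card +
      (Finset.univ.filter fun i => θbar i ≠ 0).card ≤ s + sstar :=
    Nat.add_le_add hθτ hθbar
  have hrsc := hRSC θτ θbar hcard
  have hsum_eq : ∑ i, (θτ i - θbar i) ^ 2 = ∑ i, d i ^ 2 := by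
    apply Finset.sum_congr rfl; intro i _; simp [hd]; ring
  -- l1 bound on the inner product term
  have hl1 : |∑ i, (θτ i - θbar i) * grad θbar i| ≤ G * Real.sqrt k * Δ := by
    have h1 : |∑ i, (θτ i - θbar i) * grad θbar i| ≤ ∑ i, |d i| * G := by
      refine (Finset.abs_sum_le_sum_abs _ _).trans ?_
      apply Finset.sum_le_sum; intro i _
      rw [abs_mul]
      have h2 : |θτ i - θbar i| = |d i| := by rw [hd]; simp [abs_sub_comm]
      rw [h2]
      exact mul_le_mul_of_nonneg_left (by
        simpa using norm_le_pi_norm (grad θbar) i) (abs_nonneg _)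
    refine h1.trans ?_
    rw [← Finset.sum_mul]
    have hsupp : ∑ i, |d i| ≤ Real.sqrt k * Δ := by
      set S : Finset (Fin p) := Finset.univ.filter fun i => d i ≠ 0 with hS
      have hSsub : S ⊆ (Finset.univ.filter fun i => θbar i ≠ 0) ∪
          (Finset.univ.filter fun i => θτ i ≠ 0) := by
        intro i hi
        simp only [hS, Finset.mem_filter, Finset.mem_univ, true_and] at hi
        simp only [Finset.mem_union, Finset.mem_filter, Finset.mem_univ, true_and]
        by_contra hcon
        push_neg at hcon
        exact hi (by simp [hd, hcon.1, hcon.2])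
      have hScard : (S.card : ℝ) ≤ k := by
        rw [hk]
        exact_mod_cast (Finset.card_le_card hSsub).trans
          ((Finset.card_union_le _ _).trans (by omega))
      have heq : ∑ i, |d i| = ∑ i ∈ S, |d i| := by
        rw [Finset.sum_filter]
        apply Finset.sum_congr rfl; intro i _
        by_cases h : d i = 0 <;> simp [h]
      rw [heq]
      have hcs : (∑ i ∈ S, |d i|) ^ 2 ≤ (S.card : ℝ) * ∑ i ∈ S, |d i| ^ 2 := by
        exact sq_sum_le_card_mul_sum_sq
      have hsle : ∑ i ∈ S, |d i| ^ 2 ≤ ∑ i, d i ^ 2 := by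
        calc ∑ i ∈ S, |d i| ^ 2 = ∑ i ∈ S, d i ^ 2 := by
              apply Finset.sum_congr rfl; intro i _; exact sq_abs _
          _ ≤ ∑ i, d i ^ 2 := Finset.sum_le_sum_of_subset_of_nonneg
              (Finset.subset_univ _) (fun i _ _ => sq_nonneg _)
      have hnn : 0 ≤ ∑ i ∈ S, |d i| := Finset.sum_nonneg fun i _ => abs_nonneg _
      have : (∑ i ∈ S, |d i|) ^ 2 ≤ k * Δ ^ 2 := by
        rw [hΔsq]
        calc (∑ i ∈ S, |d i|) ^ 2 ≤ (S.card : ℝ) * ∑ i ∈ S, |d i| ^ 2 := hcs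
          _ ≤ k * ∑ i, d i ^ 2 := by
              apply mul_le_mul hScard hsle (Finset.sum_nonneg fun i _ => sq_nonneg _) hk0
      nlinarith [Real.sq_sqrt hk0, Real.sqrt_nonneg k,
        mul_nonneg (Real.sqrt_nonneg k) hΔ0]
    calc (∑ i, |d i|) * G ≤ (Real.sqrt k * Δ) * G :=
          mul_le_mul_of_nonneg_right hsupp hG0
      _ = G * Real.sqrt k * Δ := by ring
  -- quadratic inequality
  have hquad : α / 2 * Δ ^ 2 ≤ ε + G * Real.sqrt k * Δ := by
    have h1 : 𝓛 θτ - 𝓛 θbar ≤ ε := by linarith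
    rw [hΔsq]
    have h2 := hrsc
    rw [hsum_eq] at h2
    have h3 : -(∑ i, (θτ i - θbar i) * grad θbar i) ≤ G * Real.sqrt k * Δ := by
      calc -(∑ i, (θτ i - θbar i) * grad θbar i) ≤ |∑ i, (θτ i - θbar i) * grad θbar i| :=
            neg_le_abs _
        _ ≤ G * Real.sqrt k * Δ := hl1
    linarith
  -- conclude
  set c : ℝ := G * Real.sqrt k with hc
  have hc0 : 0 ≤ c := mul_nonneg hG0 (Real.sqrt_nonneg _)
  set B : ℝ := Real.sqrt (2 * ε / α) with hB
  have hB0 : 0 ≤ B := Real.sqrt_nonneg _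
  have hBsq : α * B ^ 2 = 2 * ε := by
    rw [hB, Real.sq_sqrt (by positivity)]
    field_simp
  have goal2 : Δ ≤ 2 * c / α + B := by
    have key : α * (Δ - B) * (Δ + B) ≤ 2 * c * Δ := by nlinarith [hquad, hBsq]
    by_cases hcase : Δ ≤ B
    · have : 0 ≤ 2 * c / α := by positivity
      linarith
    · push_neg at hcase
      have hpos : 0 < Δ + B := by linarith
      have h4 : (α * (Δ - B)) * (Δ + B) ≤ (2 * c) * (Δ + B) := by
        nlinarith [mul_nonneg hc0 hB0]
      have h5 : α * (Δ - B) ≤ 2 * c := le_of_mul_le_mul_right h4 hpos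
      have h6 : Δ - B ≤ 2 * c / α := by
        rw [le_div_iff₀ hα]; linarith
      linarith
  calc Δ ≤ 2 * c / α + B := goal2
    _ = 2 * Real.sqrt k * G / α + B := by rw [hc]; ring
end

section
/- (Fully corrective gradient bound.) Let $f : \mathbb{R}^p \to \mathbb{R}$ be differentiable with RSC parameter $\alpha$ at sparsity level $2s + s^*$. Let $\theta^* = \arg\min_{\|\theta\|_0 \le s^*} f(\theta)$ with support $S^*$, let $S_t \subseteq [p]$ with $|S_t| \le s$, and let $\theta^t = \arg\min_{\mathrm{supp}(\theta) \subseteq S_t} f(\theta)$ with $g^t = \nabla f(\theta^t)$. Then $2\alpha\left(f(\theta^t) - f(\theta^*)\right) \le \|g^t_{S_t \cup S^*}\|_2^2 - \alpha^2 \|\theta^t_{S_t \setminus S^*}\|_2^2$. -/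
/-!
Since `θt` minimizes `f` over vectors supported in `S_t`, the gradient `g` vanishes on `S_t`.
Restricted strong convexity between `θ*` and `θt` then bounds `2α (f θt - f θ*)` by
`-2α ⟨θ* - θt, g⟩ - α² ‖θ* - θt‖²`, and this is bounded coordinatewise: on `S* \ S_t` by
`g_i²` (complete the square `(α θ*_i + g_i)² ≥ 0`), on `S_t \ S*` by `-α² (θt_i)²`, and by
`0` elsewhere.
-/

open Finset

theorem apply_eq_zero_of_isMinOn_supported {ι : Type*} [Fintype ι] [DecidableEq ι]
    {f : (ι → ℝ) → ℝ} {x g : ι → ℝ} {S : Finset ι} (hf : DifferentiableAt ℝ f x)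
    (hg : ∀ v, fderiv ℝ f x v = ∑ j, g j * v j)
    (hmin : IsMinOn f {θ | ∀ j, θ j ≠ 0 → j ∈ S} x) (hx : ∀ j, x j ≠ 0 → j ∈ S)
    {i : ι} (hi : i ∈ S) : g i = 0 := by
  have hline : ∀ t : ℝ, x + t • Pi.single i 1 ∈ {θ | ∀ j, θ j ≠ 0 → j ∈ S} := by
    intro t j hj
    by_cases hji : j = i
    · exact hji ▸ hi
    · exact hx j (by simpa [hji] using hj)
  have := hmin.hasLineDerivAt_eq_zero (hf.hasFDerivAt.hasLineDerivAt _) (.of_forall hline)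
  simpa [hg, Pi.single_apply] using this

theorem neg_two_mul_sum_mul_sub_sq_le {ι : Type*} [Fintype ι] [DecidableEq ι] (α : ℝ)
    {a b g : ι → ℝ} {S T : Finset ι} (ha : ∀ i, a i ≠ 0 → i ∈ T)
    (hb : ∀ i, b i ≠ 0 → i ∈ S) (hg : ∀ i ∈ S, g i = 0) :
    -(2 * α) * ∑ i, (a i - b i) * g i - α ^ 2 * ∑ i, (a i - b i) ^ 2 ≤
      ∑ i ∈ S ∪ T, g i ^ 2 - α ^ 2 * ∑ i ∈ S \ T, b i ^ 2 := by
  rw [← univ_inter (S ∪ T), ← univ_inter (S \ T), ← sum_ite_mem, ← sum_ite_mem, mul_sum, mul_sum,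
    mul_sum, ← sum_sub_distrib, ← sum_sub_distrib]
  refine sum_le_sum fun i _ => ?_
  have ha' : i ∉ T → a i = 0 := fun h => by_contra fun h' => h (ha i h')
  have hb' : i ∉ S → b i = 0 := fun h => by_contra fun h' => h (hb i h')
  by_cases hS : i ∈ S <;> by_cases hT : i ∈ T
  · simp [hS, hT, hg i hS]; positivity
  · simp [hS, hT, hg i hS, ha' hT]
  · simp [hS, hT, hb' hS]; nlinarith [sq_nonneg (α * a i + g i)]
  · simp [hS, hT, ha' hT, hb' hS]

theorem fully_corrective_gradient_bound_general (p s sstar : ℕ) (α : ℝ) (hα : 0 < α)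
    (f : (Fin p → ℝ) → ℝ) (grad : (Fin p → ℝ) → Fin p → ℝ)
    (hdiff : Differentiable ℝ f)
    (hgrad : ∀ x v, fderiv ℝ f x v = ∑ i, grad x i * v i)
    (hRSC : ∀ θ1 θ2 : Fin p → ℝ,
      (Finset.univ.filter fun i => θ1 i ≠ 0).card +
          (Finset.univ.filter fun i => θ2 i ≠ 0).card ≤ 2 * s + sstar →
      f θ1 - f θ2 ≥ (∑ i, (θ1 i - θ2 i) * grad θ2 i) +
        α / 2 * ∑ i, (θ1 i - θ2 i) ^ 2)
    (θstar : Fin p → ℝ)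
    (hθstar_sp : (Finset.univ.filter fun i => θstar i ≠ 0).card ≤ sstar)
    (St : Finset (Fin p)) (hSt : St.card ≤ s)
    (θt : Fin p → ℝ) (hθt_supp : ∀ i, θt i ≠ 0 → i ∈ St)
    (hθt_min : ∀ θ : Fin p → ℝ, (∀ i, θ i ≠ 0 → i ∈ St) → f θt ≤ f θ) :
    2 * α * (f θt - f θstar) ≤
      (∑ i ∈ St ∪ (Finset.univ.filter fun i => θstar i ≠ 0),
        (grad θt i) ^ 2) -
      α ^ 2 * ∑ i ∈ St \ (Finset.univ.filter fun i => θstar i ≠ 0),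
        (θt i) ^ 2 := by
  have hstat : ∀ i ∈ St, grad θt i = 0 := fun i hi =>
    apply_eq_zero_of_isMinOn_supported (hdiff θt) (hgrad θt) (isMinOn_iff.2 hθt_min) hθt_supp hi
  have hcard_t : (univ.filter fun i => θt i ≠ 0).card ≤ s :=
    (card_le_card fun i hi => hθt_supp i (mem_filter.1 hi).2).trans hSt
  have hrsc := hRSC θstar θt (by omega)
  have hbound := neg_two_mul_sum_mul_sub_sq_le α (a := θstar)
    (T := univ.filter fun i => θstar i ≠ 0) (fun i hi => mem_filter.2 ⟨mem_univ i, hi⟩)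
    hθt_supp hstat
  have hscaled := mul_le_mul_of_nonneg_left hrsc (by positivity : (0 : ℝ) ≤ 2 * α)
  linarith

/-- Fully corrective gradient bound (Lemma 4 of the paper, γ = 1/α case):
with RSC parameter `α` at level `2s + s*`, `θ*` the `s*`-sparse minimizer with
support `S*`, and `θt` the minimizer of `f` over vectors supported in `S_t`
(`|S_t| ≤ s`), we have
`2α(f(θt) - f(θ*)) ≤ ‖g_{S_t ∪ S*}‖² - α²‖θt_{S_t \ S*}‖²`. -/
theorem fully_corrective_gradient_bound (p s sstar : ℕ) (α : ℝ) (hα : 0 < α)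
    (f : (Fin p → ℝ) → ℝ) (grad : (Fin p → ℝ) → Fin p → ℝ)
    (hdiff : Differentiable ℝ f)
    (hgrad : ∀ x v, fderiv ℝ f x v = ∑ i, grad x i * v i)
    (hRSC : ∀ θ1 θ2 : Fin p → ℝ,
      (Finset.univ.filter fun i => θ1 i ≠ 0).card +
          (Finset.univ.filter fun i => θ2 i ≠ 0).card ≤ 2 * s + sstar →
      f θ1 - f θ2 ≥ (∑ i, (θ1 i - θ2 i) * grad θ2 i) +
        α / 2 * ∑ i, (θ1 i - θ2 i) ^ 2)
    (θstar : Fin p → ℝ)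
    (hθstar_sp : (Finset.univ.filter fun i => θstar i ≠ 0).card ≤ sstar)
    (hθstar_min : ∀ θ : Fin p → ℝ,
      (Finset.univ.filter fun i => θ i ≠ 0).card ≤ sstar → f θstar ≤ f θ)
    (St : Finset (Fin p)) (hSt : St.card ≤ s)
    (θt : Fin p → ℝ) (hθt_supp : ∀ i, θt i ≠ 0 → i ∈ St)
    (hθt_min : ∀ θ : Fin p → ℝ, (∀ i, θ i ≠ 0 → i ∈ St) → f θt ≤ f θ) :
    2 * α * (f θt - f θstar) ≤
      (∑ i ∈ St ∪ (Finset.univ.filter fun i => θstar i ≠ 0),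
        (grad θt i) ^ 2) -
      α ^ 2 * ∑ i ∈ St \ (Finset.univ.filter fun i => θstar i ≠ 0),
        (θt i) ^ 2 :=
  fully_corrective_gradient_bound_general p s sstar α hα f grad hdiff hgrad hRSC θstar hθstar_sp St
    hSt θt hθt_supp hθt_min
end

section
/- (General fully corrective gradient bound.) Under the setting of the previous lemma (RSC parameter $\alpha$ at level $2s+s^*$, fully corrective $s$-sparse iterate $\theta^t$ with $\nabla f(\theta^t)_{S_t} = 0$, $s^*$-sparse optimum $\theta^*$), for every $\gamma \ge 1/\alpha$: $2\gamma\left(f(\theta^t) - f(\theta^*) + \frac{\alpha}{2}\left(1 - \frac{1}{\alpha\gamma}\right)\|\theta^t - \theta^*\|_2^2\right) \le \gamma^2 \|g^t_{S_t \cup S^*}\|_2^2 - \|\theta^t_{S_t \setminus S^*}\|_2^2$. -/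
/-- General fully corrective gradient bound: under RSC with parameter `α` at
level `2s + s*`, a fully corrective `s`-sparse iterate `θt` (supported in
`S_t`, with `∇f(θt)` vanishing on `S_t`), and `s*`-sparse optimum `θ*` with
support `S*`, for every `γ ≥ 1/α`:
`2γ(f(θt) - f(θ*) + (α/2)(1 - 1/(αγ))‖θt - θ*‖²)
  ≤ γ²‖g_{S_t ∪ S*}‖² - ‖θt_{S_t \ S*}‖²`. -/
theorem general_fully_corrective_gradient_bound (p s sstar : ℕ) (α : ℝ)
    (hα : 0 < α)
    (f : (Fin p → ℝ) → ℝ) (grad : (Fin p → ℝ) → Fin p → ℝ)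
    (hdiff : Differentiable ℝ f)
    (hgrad : ∀ x v, fderiv ℝ f x v = ∑ i, grad x i * v i)
    (hRSC : ∀ θ1 θ2 : Fin p → ℝ,
      (Finset.univ.filter fun i => θ1 i ≠ 0).card +
          (Finset.univ.filter fun i => θ2 i ≠ 0).card ≤ 2 * s + sstar →
      f θ1 - f θ2 ≥ (∑ i, (θ1 i - θ2 i) * grad θ2 i) +
        α / 2 * ∑ i, (θ1 i - θ2 i) ^ 2)
    (θstar : Fin p → ℝ)
    (hθstar_sp : (Finset.univ.filter fun i => θstar i ≠ 0).card ≤ sstar)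
    (hθstar_min : ∀ θ : Fin p → ℝ,
      (Finset.univ.filter fun i => θ i ≠ 0).card ≤ sstar → f θstar ≤ f θ)
    (St : Finset (Fin p)) (hSt : St.card ≤ s)
    (θt : Fin p → ℝ) (hθt_supp : ∀ i, θt i ≠ 0 → i ∈ St)
    (hθt_min : ∀ θ : Fin p → ℝ, (∀ i, θ i ≠ 0 → i ∈ St) → f θt ≤ f θ)
    (hg0 : ∀ i ∈ St, grad θt i = 0) :
    ∀ γ : ℝ, 1 / α ≤ γ →
      2 * γ * (f θt - f θstar +
          α / 2 * (1 - 1 / (α * γ)) * ∑ i, (θt i - θstar i) ^ 2) ≤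
        γ ^ 2 * (∑ i ∈ St ∪ (Finset.univ.filter fun i => θstar i ≠ 0),
            (grad θt i) ^ 2) -
          ∑ i ∈ St \ (Finset.univ.filter fun i => θstar i ≠ 0),
            (θt i) ^ 2 := by

  intro γ hγ
  have hγpos : 0 < γ := lt_of_lt_of_le (by positivity) hγ
  have hαγ : 1 ≤ α * γ := by rw [mul_comm]; exact (div_le_iff₀ hα).mp hγ
  set Sstar := Finset.univ.filter fun i => θstar i ≠ 0 with hSsdef
  set B := ∑ i, (θt i - θstar i) * grad θt i with hBdef
  set Q := ∑ i, (θt i - θstar i) ^ 2 with hQdef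
  -- RSC application
  have hcard : (Finset.univ.filter fun i => θstar i ≠ 0).card +
      (Finset.univ.filter fun i => θt i ≠ 0).card ≤ 2 * s + sstar := by
    have h1 : (Finset.univ.filter fun i => θt i ≠ 0).card ≤ s :=
      le_trans (Finset.card_le_card fun i hi =>
        hθt_supp i (by simpa using hi)) hSt
    have h0 : (Finset.univ.filter fun i => θstar i ≠ 0).card ≤ sstar := hθstar_sp
    omega
  have hrsc := hRSC θstar θt hcard
  have e1 : (∑ i, (θstar i - θt i) * grad θt i) = -B := by
    rw [hBdef, ← Finset.sum_neg_distrib]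
    exact Finset.sum_congr rfl fun i _ => by ring
  have e2 : (∑ i, (θstar i - θt i) ^ 2) = Q := by
    rw [hQdef]; exact Finset.sum_congr rfl fun i _ => by ring
  rw [e1, e2] at hrsc
  have h2 : f θt - f θstar ≤ B - α / 2 * Q := by linarith
  have h3 : 2 * γ * (f θt - f θstar) ≤ 2 * γ * B - α * γ * Q := by
    nlinarith [mul_le_mul_of_nonneg_left h2 (show (0:ℝ) ≤ 2 * γ by positivity)]
  -- key sum inequality
  have hθt0 : ∀ i, i ∉ St → θt i = 0 := fun i hi => by
    by_contra h; exact hi (hθt_supp i h)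
  have hθs0 : ∀ i, i ∉ Sstar → θstar i = 0 := fun i hi => by
    by_contra h; exact hi (by simp [hSsdef, h])
  have hsub : St \ Sstar ⊆ St ∪ Sstar := le_trans (Finset.sdiff_subset)
    (Finset.subset_union_left)
  have hsplit : ∑ i, (2 * γ * ((θt i - θstar i) * grad θt i)
        - (θt i - θstar i) ^ 2)
      = ∑ i ∈ St ∪ Sstar, (2 * γ * ((θt i - θstar i) * grad θt i)
        - (θt i - θstar i) ^ 2) := by
    refine (Finset.sum_subset (Finset.subset_univ _) fun i _ hi => ?_).symm
    rw [Finset.mem_union] at hi; push_neg at hi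
    rw [hθt0 i hi.1, hθs0 i hi.2]; ring
  have hsdiff := Finset.sum_sdiff (f := fun i => 2 * γ * ((θt i - θstar i) * grad θt i)
        - (θt i - θstar i) ^ 2) hsub
  have hD : ∑ i ∈ St \ Sstar, (2 * γ * ((θt i - θstar i) * grad θt i)
        - (θt i - θstar i) ^ 2) = -∑ i ∈ St \ Sstar, θt i ^ 2 := by
    rw [← Finset.sum_neg_distrib]
    refine Finset.sum_congr rfl fun i hi => ?_
    rw [Finset.mem_sdiff] at hi
    rw [hg0 i hi.1, hθs0 i hi.2]; ring
  have hUD : ∑ i ∈ (St ∪ Sstar) \ (St \ Sstar),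
        (2 * γ * ((θt i - θstar i) * grad θt i) - (θt i - θstar i) ^ 2)
      ≤ γ ^ 2 * ∑ i ∈ St ∪ Sstar, grad θt i ^ 2 := by
    calc ∑ i ∈ (St ∪ Sstar) \ (St \ Sstar),
          (2 * γ * ((θt i - θstar i) * grad θt i) - (θt i - θstar i) ^ 2)
        ≤ ∑ i ∈ (St ∪ Sstar) \ (St \ Sstar), γ ^ 2 * grad θt i ^ 2 := by
          refine Finset.sum_le_sum fun i _ => ?_
          nlinarith [sq_nonneg (γ * grad θt i - (θt i - θstar i))]
      _ ≤ ∑ i ∈ St ∪ Sstar, γ ^ 2 * grad θt i ^ 2 := by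
          refine Finset.sum_le_sum_of_subset_of_nonneg Finset.sdiff_subset
            fun i _ _ => by positivity
      _ = γ ^ 2 * ∑ i ∈ St ∪ Sstar, grad θt i ^ 2 := by
          rw [Finset.mul_sum]
  have hsum1 : ∑ i, (2 * γ * ((θt i - θstar i) * grad θt i)
        - (θt i - θstar i) ^ 2) = 2 * γ * B - Q := by
    rw [hBdef, hQdef, Finset.mul_sum, ← Finset.sum_sub_distrib]
  have key : 2 * γ * B - Q ≤ γ ^ 2 * (∑ i ∈ St ∪ Sstar, grad θt i ^ 2)
      - ∑ i ∈ St \ Sstar, θt i ^ 2 := by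
    rw [← hsum1, hsplit, ← hsdiff, hD]
    linarith
  have hlhs : 2 * γ * (f θt - f θstar + α / 2 * (1 - 1 / (α * γ)) * Q)
      = 2 * γ * (f θt - f θstar) + (α * γ - 1) * Q := by
    have hne : α * γ ≠ 0 := by positivity
    field_simp
  rw [hlhs]
  nlinarith [h3, key]
end

section
/- (IHT gradient-step inner product bound.) Let $f$ be differentiable, let $\theta^t$ be $s$-sparse with support $S_t$, set $g^t = \nabla f(\theta^t)$ and $\theta^{t+1} = P_s(\theta^t - \frac{\eta'}{L} g^t)$ with support $S_{t+1}$, where $\eta' \in (0,1]$ and $L > 0$. Then $\langle \theta^{t+1} - \theta^t, g^t \rangle \le -\frac{\eta'}{2L}\|g^t_{S_t \cup S_{t+1}}\|_2^2$. -/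
/-- IHT gradient-step inner product bound (eq. (6) in the paper's appendix):
for an `s`-sparse iterate `θt` supported in `S_t` (`|S_t| = s`) with
`g = ∇f(θt)`, and `θ^{t+1} = P_s(θt - (η'/L)g)` supported on the set
`S_{t+1}` of `s` largest-magnitude coordinates of `θt - (η'/L)g`:
`⟨θ^{t+1} - θt, g⟩ ≤ -(η'/2L)‖g_{S_t ∪ S_{t+1}}‖²`. -/
theorem iht_gradient_step_bound (p s : ℕ) (L η' : ℝ)
    (hL : 0 < L) (hη0 : 0 < η') (hη1 : η' ≤ 1)
    (f : (Fin p → ℝ) → ℝ) (grad : (Fin p → ℝ) → Fin p → ℝ)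
    (hdiff : Differentiable ℝ f)
    (hgrad : ∀ x v, fderiv ℝ f x v = ∑ i, grad x i * v i)
    (θt θt1 : Fin p → ℝ) (St St1 : Finset (Fin p))
    (hStcard : St.card = s) (hSt1card : St1.card = s)
    (hθt_supp : ∀ i, θt i ≠ 0 → i ∈ St)
    (hθt1 : ∀ i, θt1 i =
      if i ∈ St1 then θt i - η' / L * grad θt i else 0)
    (htop : ∀ i ∈ St1, ∀ j ∉ St1,
      |θt j - η' / L * grad θt j| ≤ |θt i - η' / L * grad θt i|) :
    (∑ i, (θt1 i - θt i) * grad θt i) ≤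
      -(η' / (2 * L)) * ∑ i ∈ St ∪ St1, (grad θt i) ^ 2 := by
  set c := η' / L with hc
  have hcpos : 0 < c := div_pos hη0 hL
  set g := grad θt with hg
  -- restrict the sum to St ∪ St1
  have hsum : (∑ i, (θt1 i - θt i) * g i)
      = ∑ i ∈ St ∪ St1, (θt1 i - θt i) * g i := by
    symm
    apply Finset.sum_subset (Finset.subset_univ _)
    intro i _ hi
    simp only [Finset.mem_union, not_or] at hi
    have h1 : θt i = 0 := by
      by_contra h; exact hi.1 (hθt_supp i h)
    have h2 : θt1 i = 0 := by rw [hθt1 i, if_neg hi.2]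
    simp [h1, h2]
  rw [hsum]
  -- split the union
  have hsplit : St ∪ St1 = (St \ St1) ∪ St1 := by
    rw [Finset.sdiff_union_self_eq_union]
  rw [hsplit, Finset.sum_union Finset.sdiff_disjoint,
      Finset.sum_union Finset.sdiff_disjoint]
  -- evaluate on St \ St1
  have e1 : ∑ i ∈ St \ St1, (θt1 i - θt i) * g i
      = -∑ i ∈ St \ St1, θt i * g i := by
    rw [← Finset.sum_neg_distrib]
    apply Finset.sum_congr rfl
    intro i hi
    have : θt1 i = 0 := by
      rw [hθt1 i, if_neg (Finset.mem_sdiff.mp hi).2]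
    rw [this]; ring
  -- evaluate on St1
  have e2 : ∑ i ∈ St1, (θt1 i - θt i) * g i
      = -(c * ∑ i ∈ St1, g i ^ 2) := by
    rw [Finset.mul_sum, ← Finset.sum_neg_distrib]
    apply Finset.sum_congr rfl
    intro i hi
    rw [hθt1 i, if_pos hi]
    ring
  rw [e1, e2]
  -- the key comparison via a bijection between St \ St1 and St1 \ St
  have hcard : (St \ St1).card = (St1 \ St).card :=
    Finset.card_sdiff_comm (hStcard.trans hSt1card.symm)
  have key : ∑ i ∈ St \ St1, (θt i - c * g i) ^ 2
      ≤ ∑ i ∈ St1 \ St, (c * g i) ^ 2 := by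
    let e := Finset.equivOfCardEq hcard
    rw [← Finset.sum_coe_sort (St \ St1) (fun i => (θt i - c * g i) ^ 2),
        ← Finset.sum_coe_sort (St1 \ St) (fun i => (c * g i) ^ 2),
        ← e.sum_comp (fun x => (c * g x.1) ^ 2)]
    apply Finset.sum_le_sum
    intro a _
    have ha : (a : Fin p) ∈ St \ St1 := a.2
    have hea : ((e a : {x // x ∈ St1 \ St}) : Fin p) ∈ St1 \ St := (e a).2
    have haNot : (a : Fin p) ∉ St1 := (Finset.mem_sdiff.mp ha).2
    have heaIn : ((e a : {x // x ∈ St1 \ St}) : Fin p) ∈ St1 :=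
      (Finset.mem_sdiff.mp hea).1
    have heaNot : ((e a : {x // x ∈ St1 \ St}) : Fin p) ∉ St :=
      (Finset.mem_sdiff.mp hea).2
    have hzero : θt ((e a : {x // x ∈ St1 \ St}) : Fin p) = 0 := by
      by_contra h; exact heaNot (hθt_supp _ h)
    have habs := htop _ heaIn _ haNot
    rw [hzero] at habs
    have h2 : |θt (a : Fin p) - c * g (a : Fin p)| ≤ |c * g ((e a : {x // x ∈ St1 \ St}) : Fin p)| := by
      have : (0 : ℝ) - c * g ((e a : {x // x ∈ St1 \ St}) : Fin p)
          = -(c * g ((e a : {x // x ∈ St1 \ St}) : Fin p)) := by ring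
      rw [this, abs_neg] at habs
      exact habs
    calc (θt (a : Fin p) - c * g (a : Fin p)) ^ 2
        = |θt (a : Fin p) - c * g (a : Fin p)| ^ 2 := (sq_abs _).symm
      _ ≤ |c * g ((e a : {x // x ∈ St1 \ St}) : Fin p)| ^ 2 := by
          exact pow_le_pow_left₀ (abs_nonneg _) h2 2
      _ = (c * g ((e a : {x // x ∈ St1 \ St}) : Fin p)) ^ 2 := sq_abs _
  have key2 : ∑ i ∈ St1 \ St, (c * g i) ^ 2 ≤ ∑ i ∈ St1, (c * g i) ^ 2 := by
    apply Finset.sum_le_sum_of_subset_of_nonneg (Finset.sdiff_subset)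
    intro i _ _; positivity
  have keyexp : ∑ i ∈ St \ St1, (θt i - c * g i) ^ 2
      = (∑ i ∈ St \ St1, θt i ^ 2) - 2 * c * (∑ i ∈ St \ St1, θt i * g i)
        + c ^ 2 * (∑ i ∈ St \ St1, g i ^ 2) := by
    rw [Finset.mul_sum, Finset.mul_sum, ← Finset.sum_sub_distrib,
        ← Finset.sum_add_distrib]
    apply Finset.sum_congr rfl
    intro i _; ring
  have keyexp2 : ∑ i ∈ St1, (c * g i) ^ 2 = c ^ 2 * ∑ i ∈ St1, g i ^ 2 := by
    rw [Finset.mul_sum]; apply Finset.sum_congr rfl; intro i _; ring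
  set A := ∑ i ∈ St \ St1, g i ^ 2 with hA
  set B := ∑ i ∈ St1, g i ^ 2 with hB
  set T := ∑ i ∈ St \ St1, θt i * g i with hT
  set Q := ∑ i ∈ St \ St1, θt i ^ 2 with hQ
  have hQnn : 0 ≤ Q := Finset.sum_nonneg fun i _ => sq_nonneg _
  have hkey : Q - 2 * c * T + c ^ 2 * A ≤ c ^ 2 * B := by
    rw [← keyexp, ← keyexp2]
    exact key.trans key2
  have hfinal : -T - c * B ≤ -(c / 2) * (A + B) := by
    nlinarith [mul_pos hcpos hcpos, sq_nonneg c]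
  have hco : -(η' / (2 * L)) = -(c / 2) := by
    rw [hc]; ring
  rw [hco]
  linarith [hfinal]
end
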